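/- Let (X, u) be an ultrametric space whose partially ordered value set Γ is countable and narrow (contains no infinite antichain). Then the ultrametric ball space (X, 𝓑_u) is chain union stable. -/
import Mathlib


open Set

section BasicDefs

variable {X : Type*}

/-- `cu 𝓑` is the family of all unions of nonempty inclusion-chains contained in `𝓑`. -/
def cu (B : Set (Set X)) : Set (Set X) :=
  {U | ∃ C : Set (Set X), C ⊆ B ∧ C.Nonempty ∧ IsChain (· ⊆ ·) C ∧ U = ⋃₀ C}

/-- A family of balls is chain union closed if it coincides with its family of chain unions. -/
def ChainUnionClosed (B : Set (Set X)) : Prop := cu B = B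

/-- A ball space is chain union stable if `cu 𝓑` is chain union closed. -/
def ChainUnionStable (B : Set (Set X)) : Prop := ChainUnionClosed (cu B)

/-- Spherical completeness: every nonempty chain of balls has nonempty intersection. -/
def SphericallyComplete (B : Set (Set X)) : Prop :=
  ∀ C : Set (Set X), C ⊆ B → C.Nonempty → IsChain (· ⊆ ·) C → (⋂₀ C).Nonempty

/-- A ball space: a nonempty collection of nonempty subsets (of a nonempty set `X`). -/
def IsBallSpace (B : Set (Set X)) : Prop := B.Nonempty ∧ ∀ S ∈ B, S.Nonempty

end BasicDefs

section UltraDefs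

variable {X : Type*} {Γ : Type*}

/-- An ultrametric on `X` with values in a poset `Γ` with bottom element `⊥`:
(U1) `u x y = ⊥ ↔ x = y`, (U2) the ultrametric triangle law, (U3) symmetry. -/
def IsUltrametric [PartialOrder Γ] [OrderBot Γ] (u : X → X → Γ) : Prop :=
  (∀ x y, u x y = ⊥ ↔ x = y) ∧
  (∀ x y z γ, u x y ≤ γ → u y z ≤ γ → u x z ≤ γ) ∧
  (∀ x y, u x y = u y x)

/-- The precise ultrametric ball `B(x,y) = {z | u x z ≤ u x y}`. -/
def uball [PartialOrder Γ] (u : X → X → Γ) (x y : X) : Set X :=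
  {z | u x z ≤ u x y}

/-- The ultrametric ball space: the family of all precise balls. -/
def uballSpace [PartialOrder Γ] (u : X → X → Γ) : Set (Set X) :=
  {B | ∃ x y, B = uball u x y}

end UltraDefs

section NarrowDefs

/-- A poset is narrow if it contains no infinite set of pairwise incomparable elements. -/
def IsNarrow (P : Type*) [PartialOrder P] : Prop :=
  ∀ A : Set P, (∀ a ∈ A, ∀ b ∈ A, a ≠ b → ¬a ≤ b ∧ ¬b ≤ a) → A.Finite

/-- A family of sets is narrow (as a poset under inclusion) if it contains no infinite
subfamily of pairwise `⊆`-incomparable sets. -/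
def IsNarrowFamily {X : Type*} (F : Set (Set X)) : Prop :=
  ∀ A ⊆ F, (∀ a ∈ A, ∀ b ∈ A, a ≠ b → ¬a ⊆ b ∧ ¬b ⊆ a) → A.Finite

end NarrowDefs

section Aux
set_option linter.unusedSectionVars false
variable {X : Type*} {Γ : Type*} [PartialOrder Γ] [OrderBot Γ]

lemma mem_uball_self (u : X → X → Γ) (hu : IsUltrametric u) (x y : X) : x ∈ uball u x y := by
  show u x x ≤ u x y
  rw [(hu.1 x x).mpr rfl]
  exact bot_le

lemma mem_uball_right (u : X → X → Γ) (x y : X) : y ∈ uball u x y := le_refl _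

lemma uball_subset (u : X → X → Γ) (hu : IsUltrametric u) {x y x' y' : X}
    (hx : x' ∈ uball u x y) (hy : y' ∈ uball u x y) : uball u x' y' ⊆ uball u x y := by
  obtain ⟨h1, h2, h3⟩ := hu
  intro w hw
  have hx' : u x' x ≤ u x y := by rw [h3]; exact hx
  have hxy' : u x' y' ≤ u x y := h2 x' x y' _ hx' hy
  exact h2 x x' w _ hx (le_trans hw hxy')

lemma uball_recenter (u : X → X → Γ) (hu : IsUltrametric u) {x y x' : X}
    (hx : x' ∈ uball u x y) : uball u x y = {w | u x' w ≤ u x y} := by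
  obtain ⟨h1, h2, h3⟩ := hu
  ext w
  constructor
  · intro hw; exact h2 x' x w _ (by rw [h3]; exact hx) hw
  · intro hw; exact h2 x x' w _ hx hw

lemma ball_subset_of_endpoints (u : X → X → Γ) (hu : IsUltrametric u)
    {E : Set (Set X)} (hE : E ⊆ uballSpace u) (hch : IsChain (· ⊆ ·) E)
    {x y : X} (hx : x ∈ ⋃₀ E) (hy : y ∈ ⋃₀ E) :
    ∃ D ∈ E, uball u x y ⊆ D := by
  obtain ⟨D1, hD1, hx1⟩ := hx
  obtain ⟨D2, hD2, hy2⟩ := hy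
  rcases eq_or_ne D1 D2 with rfl | hne
  · obtain ⟨a, b, rfl⟩ := hE hD1
    exact ⟨_, hD1, uball_subset u hu hx1 hy2⟩
  · rcases hch hD1 hD2 hne with h | h
    · obtain ⟨a, b, rfl⟩ := hE hD2
      exact ⟨_, hD2, uball_subset u hu (h hx1) hy2⟩
    · obtain ⟨a, b, rfl⟩ := hE hD1
      exact ⟨_, hD1, uball_subset u hu hx1 (h hy2)⟩
end Aux

/-- Theorem 1.7: the ball space of an ultrametric space with a countable narrow value set
is chain union stable. -/
theorem ultrametric_countable_narrow_chainUnionStable {X Γ : Type*} [Nonempty X]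
    [PartialOrder Γ] [OrderBot Γ] [Countable Γ] (hnarrow : IsNarrow Γ)
    (u : X → X → Γ) (hu : IsUltrametric u) :
    ChainUnionStable (uballSpace u) := by
  apply Set.Subset.antisymm
  · rintro U ⟨C, hC, hCne, hchain, rfl⟩
    -- The directed family of all balls contained in some member of C
    set D : Set (Set X) := {B | B ∈ uballSpace u ∧ ∃ V ∈ C, B ⊆ V} with hD
    have hDsub : ∀ B ∈ D, B ⊆ ⋃₀ C := by
      rintro B ⟨-, V, hV, hBV⟩
      exact hBV.trans (subset_sUnion_of_mem hV)
    -- every point of ⋃₀ C is in some member of D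
    have hcover : ∀ w ∈ ⋃₀ C, ∃ B ∈ D, w ∈ B := by
      rintro w ⟨V, hV, hwV⟩
      obtain ⟨E, hE, -, -, rfl⟩ := hC hV
      obtain ⟨B, hB, hwB⟩ := hwV
      exact ⟨B, ⟨hE hB, _, hV, subset_sUnion_of_mem hB⟩, hwB⟩
    -- D is directed
    have hdir : ∀ B ∈ D, ∀ B' ∈ D, ∃ E ∈ D, B ⊆ E ∧ B' ⊆ E := by
      rintro B ⟨⟨x, y, rfl⟩, V, hV, hBV⟩ B' ⟨⟨x', y', rfl⟩, V', hV', hBV'⟩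
      obtain ⟨W, hW, hVW, hV'W⟩ : ∃ W ∈ C, V ⊆ W ∧ V' ⊆ W := by
        rcases eq_or_ne V V' with rfl | hne
        · exact ⟨V, hV, subset_rfl, subset_rfl⟩
        · rcases hchain hV hV' hne with h | h
          · exact ⟨V', hV', h, subset_rfl⟩
          · exact ⟨V, hV, subset_rfl, h⟩
      obtain ⟨E, hE, -, hEch, rfl⟩ := hC hW
      obtain ⟨D1, hD1, hBD1⟩ := ball_subset_of_endpoints u hu hE hEch
        (hVW (hBV (mem_uball_self u hu x y))) (hVW (hBV (mem_uball_right u x y)))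
      obtain ⟨D2, hD2, hBD2⟩ := ball_subset_of_endpoints u hu hE hEch
        (hV'W (hBV' (mem_uball_self u hu x' y'))) (hV'W (hBV' (mem_uball_right u x' y')))
      obtain ⟨D3, hD3, h13, h23⟩ : ∃ D3 ∈ E, D1 ⊆ D3 ∧ D2 ⊆ D3 := by
        rcases eq_or_ne D1 D2 with rfl | hne
        · exact ⟨D1, hD1, subset_rfl, subset_rfl⟩
        · rcases hEch hD1 hD2 hne with h | h
          · exact ⟨D2, hD2, h, subset_rfl⟩
          · exact ⟨D1, hD1, subset_rfl, h⟩
      exact ⟨D3, ⟨hE hD3, _, hW, subset_sUnion_of_mem hD3⟩,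
        hBD1.trans h13, hBD2.trans h23⟩
    -- a base point
    obtain ⟨V0, hV0⟩ := hCne
    obtain ⟨E0, hE0, ⟨B0', hB0'⟩, -, hV0eq⟩ := hC hV0
    obtain ⟨x0, hx0⟩ : (⋃₀ C).Nonempty := by
      obtain ⟨a, b, rfl⟩ := hE0 hB0'
      refine ⟨a, V0, hV0, ?_⟩
      rw [hV0eq]
      exact subset_sUnion_of_mem hB0' (mem_uball_self u hu a b)
    -- the cofinal countable subfamily through x0
    set D' : Set (Set X) := {B | B ∈ D ∧ x0 ∈ B} with hD'
    have hD'dir : ∀ B ∈ D', ∀ B' ∈ D', ∃ E ∈ D', B ⊆ E ∧ B' ⊆ E := by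
      rintro B ⟨hB, hx0B⟩ B' ⟨hB', -⟩
      obtain ⟨E, hE, hBE, hB'E⟩ := hdir B hB B' hB'
      exact ⟨E, ⟨hE, hBE hx0B⟩, hBE, hB'E⟩
    have hD'ne : D'.Nonempty := by
      obtain ⟨B, hB, hx0B⟩ := hcover x0 hx0
      exact ⟨B, hB, hx0B⟩
    have hD'union : ⋃₀ D' = ⋃₀ C := by
      apply Set.Subset.antisymm
      · rintro w ⟨B, ⟨hB, -⟩, hwB⟩
        exact hDsub B hB hwB
      · intro w hw
        obtain ⟨B, hB, hwB⟩ := hcover w hw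
        obtain ⟨B1, hB1⟩ := hD'ne
        obtain ⟨E, hE, hBE, hB1E⟩ := hdir B hB B1 hB1.1
        exact ⟨E, ⟨hE, hB1E hB1.2⟩, hBE hwB⟩
    -- D' is countable
    have hrep : ∀ B : ↥D', ∃ γ : Γ, (B : Set X) = {w | u x0 w ≤ γ} := by
      rintro ⟨B, ⟨⟨x, y, rfl⟩, -⟩, hx0B⟩
      exact ⟨u x y, uball_recenter u hu hx0B⟩
    choose f hf using hrep
    have hfinj : Function.Injective f := by
      intro B B' h
      apply Subtype.ext
      rw [hf B, hf B', h]
    have hcnt : D'.Countable := Set.countable_coe_iff.mp (hfinj.countable)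
    obtain ⟨g, hgrange⟩ := Set.Countable.exists_eq_range hcnt hD'ne
    have hgmem : ∀ n, g n ∈ D' := fun n => hgrange ▸ Set.mem_range_self n
    -- build an increasing cofinal sequence
    have hub : ∀ B : ↥D', ∀ B' : ↥D', ∃ E : ↥D', (B : Set X) ⊆ E ∧ (B' : Set X) ⊆ E := by
      rintro ⟨B, hB⟩ ⟨B', hB'⟩
      obtain ⟨E, hE, h1, h2⟩ := hD'dir B hB B' hB'
      exact ⟨⟨E, hE⟩, h1, h2⟩
    choose ub hub1 hub2 using hub
    let g' : ℕ → ↥D' := fun n => ⟨g n, hgmem n⟩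
    obtain ⟨seq, hseq0, hseqsucc⟩ : ∃ s : ℕ → ↥D', s 0 = g' 0 ∧
        ∀ n, s (n + 1) = ub (s n) (g' (n + 1)) :=
      ⟨fun n => Nat.rec (motive := fun _ => ↥D') (g' 0) (fun k p => ub p (g' (k + 1))) n,
        rfl, fun n => rfl⟩
    have hmono : ∀ n, (seq n : Set X) ⊆ (seq (n + 1) : Set X) := by
      intro n; rw [hseqsucc]; exact hub1 _ _
    have hmono' : Monotone fun n => (seq n : Set X) :=
      monotone_nat_of_le_succ hmono
    have hgsub : ∀ n, (g n : Set X) ⊆ (seq n : Set X) := by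
      intro n
      cases n with
      | zero => rw [hseq0]
      | succ k => rw [hseqsucc]; exact hub2 (seq k) (g' (k + 1))
    refine ⟨Set.range (fun n => (seq n : Set X)), ?_, ⟨_, Set.mem_range_self 0⟩, ?_, ?_⟩
    · rintro B ⟨n, rfl⟩
      exact (seq n).2.1.1
    · rintro A ⟨m, rfl⟩ B ⟨n, rfl⟩ hne
      rcases le_total m n with h | h
      · exact Or.inl (hmono' h)
      · exact Or.inr (hmono' h)
    · apply Set.Subset.antisymm
      · intro w hw
        rw [← hD'union] at hw
        obtain ⟨B, hB, hwB⟩ := hw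
        rw [hgrange] at hB
        obtain ⟨n, rfl⟩ := hB
        exact ⟨(seq n : Set X), ⟨n, rfl⟩, hgsub n hwB⟩
      · rintro w ⟨B, ⟨n, rfl⟩, hwB⟩
        exact hDsub _ (seq n).2.1 hwB
  · intro U hU
    refine ⟨{U}, by simpa using hU, ⟨U, rfl⟩, ?_, (Set.sUnion_singleton U).symm⟩
    rintro A rfl B rfl hne
    exact absurd rfl hne
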